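/- Under the homotopy CGM with additively inexact linear minimization oracle of accuracy parameter δ ≥ 0, for every k ≥ 1 the iterate x_{k+1} satisfies the smoothed-gap bound F_{β_k}(x_{k+1}) − F⋆ ≤ 2 D² ( L_f/(k+1) + ‖A‖²/(β₀ √(k+1)) ) (1 + δ). -/

import Mathlib

/-!
The smoothed objective `F_γ = f + g_γ ∘ A` is smooth: `f` has an `L_f`-Lipschitz gradient and
the Moreau envelope `g_γ` has the `1/γ`-Lipschitz gradient `(z - prox_γ z) / γ`. Hence one
conditional-gradient step is bounded by the linearization of `F_γ` at `x_k` plus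
`η² D² (L_f + ‖A‖²/γ) / 2`, and the inexact oracle compares the linear term with that of `x⋆`.
Convexity of `g` gives the sharper lower bound
`g (A y) ≥ g_γ (A x) + ⟪∇g_γ (A x), A (y - x)⟫ + γ/2 ‖∇g_γ (A x)‖²`; its extra term pays for
lowering the smoothing parameter from `β_k` to `β_{k+1}`, because
`g_γ ≤ g_β + (β - γ)/2 ‖∇g_γ‖²` for `γ ≤ β`. This yields the recursion
`e_{k+1} ≤ (1 - η_{k+1}) e_k + η_{k+1}² D² (L_f + ‖A‖²/β_{k+1}) (1 + δ) / 2`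
for `e_k = F_{β_k}(x_{k+1}) - F⋆`, which an induction turns into the stated rate.
-/

open RealInnerProductSpace Set Filter Topology
open AffineMap (lineMap lineMap_vsub_left hasDerivAt_lineMap)

section Gradient

variable {E : Type*} [NormedAddCommGroup E] [InnerProductSpace ℝ E] [CompleteSpace E]
  {f : E → ℝ} {f' : E → E}

theorem HasGradientAt.hasDerivAt_comp_lineMap {p y a : E} {t : ℝ}
    (h : HasGradientAt f a (lineMap p y t)) : HasDerivAt (f ∘ lineMap p y) ⟪a, y - p⟫ t := by
  simpa using (hasGradientAt_iff_hasFDerivAt.mp h).comp_hasDerivAt t hasDerivAt_lineMap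

theorem ConvexOn.inner_sub_le_of_hasGradientAt (hf : ConvexOn ℝ univ f) {p a : E}
    (h : HasGradientAt f a p) (y : E) : ⟪a, y - p⟫ ≤ f y - f p := by
  have hφ : ConvexOn ℝ univ (f ∘ lineMap (k := ℝ) p y) := by
    simpa using hf.comp_affineMap (lineMap p y)
  have hd : HasDerivAt (f ∘ lineMap (k := ℝ) p y) ⟪a, y - p⟫ 0 :=
    HasGradientAt.hasDerivAt_comp_lineMap (by simpa using h)
  simpa [slope_def_field] using hφ.le_slope_of_hasDerivAt (mem_univ 0) (mem_univ 1) one_pos hd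

theorem le_add_inner_add_of_lipschitz_gradient (hf : ∀ x, HasGradientAt f (f' x) x) {L : ℝ}
    (hlip : ∀ x y, ‖f' x - f' y‖ ≤ L * ‖x - y‖) (p y : E) :
    f y ≤ f p + ⟪f' p, y - p⟫ + L / 2 * ‖y - p‖ ^ 2 := by
  have hφ (t : ℝ) : HasDerivAt (f ∘ lineMap p y) ⟪f' (lineMap p y t), y - p⟫ t :=
    (hf _).hasDerivAt_comp_lineMap
  have hB (t : ℝ) : HasDerivAt (fun t => f p + t * ⟪f' p, y - p⟫ + L / 2 * t ^ 2 * ‖y - p‖ ^ 2)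
      (⟪f' p, y - p⟫ + L * t * ‖y - p‖ ^ 2) t := by
    refine ((((hasDerivAt_id' t).mul_const ⟪f' p, y - p⟫).const_add (f p)).add
      (((hasDerivAt_pow 2 t).const_mul (L / 2)).mul_const (‖y - p‖ ^ 2))).congr_deriv ?_
    push_cast; ring
  have hbound : ∀ t ∈ Ico (0 : ℝ) 1,
      ⟪f' (lineMap p y t), y - p⟫ ≤ ⟪f' p, y - p⟫ + L * t * ‖y - p‖ ^ 2 := by
    rintro t ⟨ht, -⟩
    have hdist : ‖lineMap p y t - p‖ = t * ‖y - p‖ := by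
      rw [← vsub_eq_sub, lineMap_vsub_left, vsub_eq_sub, norm_smul, Real.norm_of_nonneg ht]
    calc ⟪f' (lineMap p y t), y - p⟫
        = ⟪f' p, y - p⟫ + ⟪f' (lineMap p y t) - f' p, y - p⟫ := by rw [inner_sub_left]; ring
      _ ≤ ⟪f' p, y - p⟫ + ‖f' (lineMap p y t) - f' p‖ * ‖y - p‖ := by
        gcongr; exact real_inner_le_norm _ _
      _ ≤ ⟪f' p, y - p⟫ + L * (t * ‖y - p‖) * ‖y - p‖ := by
        gcongr; rw [← hdist]; exact hlip _ _
      _ = ⟪f' p, y - p⟫ + L * t * ‖y - p‖ ^ 2 := by ring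
  have := image_le_of_deriv_right_le_deriv_boundary
    (fun t _ => (hφ t).continuousAt.continuousWithinAt) (fun t _ => (hφ t).hasDerivWithinAt)
    (by simp) (fun t _ => (hB t).continuousAt.continuousWithinAt)
    (fun t _ => (hB t).hasDerivWithinAt) hbound (right_mem_Icc.2 zero_le_one)
  simpa using this

end Gradient

theorem le_of_forall_mem_Ioc_le_add_mul {a b c : ℝ} (h : ∀ t ∈ Ioc (0 : ℝ) 1, a ≤ b + t * c) :
    a ≤ b := by
  have hlim : Tendsto (fun t : ℝ => b + t * c) (𝓝[>] 0) (𝓝 b) := by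
    have hcont : Continuous (fun t : ℝ => b + t * c) := by fun_prop
    simpa using (hcont.tendsto 0).mono_left nhdsWithin_le_nhds
  exact ge_of_tendsto hlim (by filter_upwards [Ioc_mem_nhdsGT one_pos] using h)

section Moreau

variable {G : Type*} [NormedAddCommGroup G]

noncomputable def moreauEnvelope (g : G → ℝ) (β : ℝ) (z : G) : ℝ :=
  ⨅ y, g y + ‖z - y‖ ^ 2 / (2 * β)

def IsProxPoint (g : G → ℝ) (β : ℝ) (z q : G) : Prop :=
  ∀ y, g q + ‖z - q‖ ^ 2 / (2 * β) ≤ g y + ‖z - y‖ ^ 2 / (2 * β)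

namespace IsProxPoint

variable {g : G → ℝ} {β : ℝ} {z q : G}

theorem moreauEnvelope_eq (hq : IsProxPoint g β z q) :
    moreauEnvelope g β z = g q + ‖z - q‖ ^ 2 / (2 * β) :=
  le_antisymm (ciInf_le ⟨_, forall_mem_range.2 hq⟩ q) (le_ciInf hq)

theorem moreauEnvelope_le (hq : IsProxPoint g β z q) (y : G) :
    moreauEnvelope g β z ≤ g y + ‖z - y‖ ^ 2 / (2 * β) :=
  hq.moreauEnvelope_eq ▸ hq y

variable [InnerProductSpace ℝ G]

theorem moreauEnvelope_le_add_inner (hβ : 0 < β) (hq : IsProxPoint g β z q) {z' q' : G}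
    (hq' : IsProxPoint g β z' q') :
    moreauEnvelope g β z'
      ≤ moreauEnvelope g β z + ⟪z - q, z' - z⟫ / β + ‖z' - z‖ ^ 2 / (2 * β) := by
  have hsplit : ‖z' - q‖ ^ 2 = ‖z' - z‖ ^ 2 + 2 * ⟪z' - z, z - q⟫ + ‖z - q‖ ^ 2 := by
    rw [← norm_add_sq_real, sub_add_sub_cancel]
  calc moreauEnvelope g β z' ≤ g q + ‖z' - q‖ ^ 2 / (2 * β) := hq'.moreauEnvelope_le q
    _ = _ := by rw [hq.moreauEnvelope_eq, hsplit, real_inner_comm]; field_simp; ring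

theorem inner_div_le_sub (hg : ConvexOn ℝ univ g) (hβ : 0 < β) (hq : IsProxPoint g β z q)
    (w : G) : ⟪z - q, w - q⟫ / β ≤ g w - g q := by
  -- test the minimality of `q` against `t • w + (1 - t) • q` and let `t → 0`
  refine le_of_forall_mem_Ioc_le_add_mul (c := ‖w - q‖ ^ 2 / (2 * β)) fun t ⟨ht0, ht1⟩ => ?_
  have hconv := hg.2 (mem_univ w) (mem_univ q) ht0.le (sub_nonneg.2 ht1) (add_sub_cancel t 1)
  have hmin := hq (t • w + (1 - t) • q)
  have hexp : ‖z - (t • w + (1 - t) • q)‖ ^ 2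
      = ‖z - q‖ ^ 2 - 2 * t * ⟪z - q, w - q⟫ + t ^ 2 * ‖w - q‖ ^ 2 := by
    rw [show z - (t • w + (1 - t) • q) = (z - q) - t • (w - q) by module, norm_sub_sq_real,
      real_inner_smul_right, norm_smul, Real.norm_of_nonneg ht0.le]
    ring
  rw [hexp] at hmin
  simp only [smul_eq_mul] at hconv
  have key : t * (⟪z - q, w - q⟫ / β) ≤ t * (g w - g q + t * (‖w - q‖ ^ 2 / (2 * β))) := by
    field_simp at hmin ⊢
    nlinarith
  exact le_of_mul_le_mul_left key ht0

theorem moreauEnvelope_add_inner_div_le (hg : ConvexOn ℝ univ g) (hβ : 0 < β)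
    (hq : IsProxPoint g β z q) (w : G) :
    moreauEnvelope g β z + ⟪z - q, w - z⟫ / β + ‖z - q‖ ^ 2 / (2 * β) ≤ g w := by
  have hsub := hq.inner_div_le_sub hg hβ w
  rw [show w - q = (w - z) + (z - q) by abel, inner_add_right, real_inner_self_eq_norm_sq] at hsub
  rw [hq.moreauEnvelope_eq]
  have : (⟪z - q, w - z⟫ + ‖z - q‖ ^ 2) / β
      = ⟪z - q, w - z⟫ / β + ‖z - q‖ ^ 2 / (2 * β) + ‖z - q‖ ^ 2 / (2 * β) := by
    field_simp; ring
  linarith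

theorem moreauEnvelope_le_of_le (hg : ConvexOn ℝ univ g) {γ : ℝ} (hγ : 0 < γ) (hγβ : γ ≤ β)
    (hq : IsProxPoint g γ z q) :
    moreauEnvelope g γ z ≤ moreauEnvelope g β z + (β - γ) * ‖z - q‖ ^ 2 / (2 * γ ^ 2) := by
  have hβ : 0 < β := hγ.trans_le hγβ
  rw [hq.moreauEnvelope_eq, ← sub_le_iff_le_add]
  refine le_ciInf fun y => ?_
  have hsub := hq.inner_div_le_sub hg hγ y
  rw [show y - q = (z - q) - (z - y) by abel, inner_sub_right, real_inner_self_eq_norm_sq] at hsub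
  set a := z - q
  set b := z - y
  -- `‖β • a - γ • b‖² ≥ 0` is exactly the gap between the two sides
  have hsq : 0 ≤ β ^ 2 * ‖a‖ ^ 2 - 2 * (β * γ) * ⟪a, b⟫ + γ ^ 2 * ‖b‖ ^ 2 := by
    have := sq_nonneg ‖β • a - γ • b‖
    rw [norm_sub_sq_real, real_inner_smul_left, real_inner_smul_right, norm_smul, norm_smul,
      Real.norm_of_nonneg hβ.le, Real.norm_of_nonneg hγ.le, mul_pow, mul_pow] at this
    linarith
  have hgap : (g y + ‖b‖ ^ 2 / (2 * β))
        - (g q + ‖a‖ ^ 2 / (2 * γ) - (β - γ) * ‖a‖ ^ 2 / (2 * γ ^ 2))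
      = (g y - g q - (‖a‖ ^ 2 - ⟪a, b⟫) / γ)
        + (β ^ 2 * ‖a‖ ^ 2 - 2 * (β * γ) * ⟪a, b⟫ + γ ^ 2 * ‖b‖ ^ 2) / (2 * β * γ ^ 2) := by
    field_simp; ring
  have := div_nonneg hsq (by positivity : (0 : ℝ) ≤ 2 * β * γ ^ 2)
  linarith

end IsProxPoint

end Moreau

noncomputable def smoothedObjective {E G : Type*} [NormedAddCommGroup E] [NormedSpace ℝ E]
    [NormedAddCommGroup G] [NormedSpace ℝ G] (f : E → ℝ) (g : G → ℝ) (A : E →L[ℝ] G) (β : ℝ)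
    (x : E) : ℝ :=
  f x + moreauEnvelope g β (A x)

section ConditionalGradient

variable {E G : Type*} [NormedAddCommGroup E] [InnerProductSpace ℝ E] [CompleteSpace E]
  [NormedAddCommGroup G] [InnerProductSpace ℝ G] [CompleteSpace G]
  {f : E → ℝ} {f' : E → E} {L_f : ℝ} {A : E →L[ℝ] G} {g : G → ℝ} {γ : ℝ}

theorem inner_smul_add_adjoint_div (hγ : γ ≠ 0) (a w : E) (r : G) :
    ⟪γ • a + ContinuousLinearMap.adjoint A r, w⟫ / γ = ⟪a, w⟫ + ⟪r, A w⟫ / γ := by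
  rw [inner_add_left, real_inner_smul_left, ContinuousLinearMap.adjoint_inner_left]
  field_simp

theorem smoothedObjective_add_le (hf_grad : ∀ x, HasGradientAt f (f' x) x)
    (hf'_lip : ∀ x y, ‖f' x - f' y‖ ≤ L_f * ‖x - y‖) (hγ : 0 < γ) {x d : E} {q q' : G}
    (hq : IsProxPoint g γ (A x) q) (hq' : IsProxPoint g γ (A (x + d)) q') :
    smoothedObjective f g A γ (x + d) ≤ smoothedObjective f g A γ x
      + ⟪γ • f' x + ContinuousLinearMap.adjoint A (A x - q), d⟫ / γ
      + (L_f + ‖A‖ ^ 2 / γ) * ‖d‖ ^ 2 / 2 := by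
  have hf := le_add_inner_add_of_lipschitz_gradient hf_grad hf'_lip x (x + d)
  have hg := hq.moreauEnvelope_le_add_inner hγ hq'
  have hA : ‖A d‖ ^ 2 / (2 * γ) ≤ ‖A‖ ^ 2 / γ * ‖d‖ ^ 2 / 2 := by
    calc ‖A d‖ ^ 2 / (2 * γ) ≤ (‖A‖ * ‖d‖) ^ 2 / (2 * γ) := by gcongr; exact A.le_opNorm d
      _ = _ := by ring
  rw [add_sub_cancel_left] at hf
  rw [map_add, add_sub_cancel_left] at hg
  rw [inner_smul_add_adjoint_div hγ.ne']
  simp only [smoothedObjective, map_add] at hg ⊢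
  linarith

theorem smoothedObjective_add_inner_div_le (hf_cvx : ConvexOn ℝ univ f)
    (hf_grad : ∀ x, HasGradientAt f (f' x) x) (hg_cvx : ConvexOn ℝ univ g) (hγ : 0 < γ) {x : E}
    {q : G} (hq : IsProxPoint g γ (A x) q) (y : E) :
    smoothedObjective f g A γ x + ⟪γ • f' x + ContinuousLinearMap.adjoint A (A x - q), y - x⟫ / γ
      + ‖A x - q‖ ^ 2 / (2 * γ) ≤ f y + g (A y) := by
  have hf := hf_cvx.inner_sub_le_of_hasGradientAt (hf_grad x) y
  have hg := hq.moreauEnvelope_add_inner_div_le hg_cvx hγ (A y)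
  rw [inner_smul_add_adjoint_div hγ.ne', map_sub, smoothedObjective]
  linarith

theorem smoothedObjective_cgm_step (hf_cvx : ConvexOn ℝ univ f)
    (hf_grad : ∀ x, HasGradientAt f (f' x) x) (hLf : 0 ≤ L_f)
    (hf'_lip : ∀ x y, ‖f' x - f' y‖ ≤ L_f * ‖x - y‖) (hg_cvx : ConvexOn ℝ univ g) (hγ : 0 < γ)
    {prox : G → G} (hprox : ∀ z, IsProxPoint g γ z (prox z)) {η δ D : ℝ} (hη : 0 ≤ η)
    {x s y : E} (hs : ‖s - x‖ ≤ D)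
    (hlmo : ⟪γ • f' x + ContinuousLinearMap.adjoint A (A x - prox (A x)), s⟫
      ≤ ⟪γ • f' x + ContinuousLinearMap.adjoint A (A x - prox (A x)), y⟫
        + δ * (η * γ / 2) * D ^ 2 * (L_f + ‖A‖ ^ 2 / γ)) :
    smoothedObjective f g A γ (x + η • (s - x)) - (f y + g (A y))
      ≤ (1 - η) * (smoothedObjective f g A γ x - (f y + g (A y)))
        - η * (‖A x - prox (A x)‖ ^ 2 / (2 * γ))
        + η ^ 2 * (D ^ 2 * (1 + δ)) * (L_f + ‖A‖ ^ 2 / γ) / 2 := by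
  set v := γ • f' x + ContinuousLinearMap.adjoint A (A x - prox (A x))
  set L := L_f + ‖A‖ ^ 2 / γ
  have hL : 0 ≤ L := by positivity
  have hup := smoothedObjective_add_le hf_grad hf'_lip hγ (hprox (A x))
    (hprox (A (x + η • (s - x))))
  have hlow := smoothedObjective_add_inner_div_le hf_cvx hf_grad hg_cvx hγ (hprox (A x)) y
  have hinner : ⟪v, η • (s - x)⟫ / γ ≤ η * (⟪v, y - x⟫ / γ) + η ^ 2 * δ * D ^ 2 * L / 2 := by
    rw [real_inner_smul_right, inner_sub_right, inner_sub_right]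
    calc η * (⟪v, s⟫ - ⟪v, x⟫) / γ ≤ η * (⟪v, y⟫ + δ * (η * γ / 2) * D ^ 2 * L - ⟪v, x⟫) / γ := by
          gcongr
      _ = _ := by field_simp; ring
  have hnorm : L * ‖η • (s - x)‖ ^ 2 / 2 ≤ L * (η ^ 2 * D ^ 2) / 2 := by
    rw [norm_smul, mul_pow, Real.norm_of_nonneg hη]
    gcongr
  have hdescent : η * (⟪v, y - x⟫ / γ)
      ≤ η * (f y + g (A y) - smoothedObjective f g A γ x - ‖A x - prox (A x)‖ ^ 2 / (2 * γ)) :=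
    mul_le_mul_of_nonneg_left (by linarith) hη
  linarith

theorem smoothedObjective_homotopy_step (hf_cvx : ConvexOn ℝ univ f)
    (hf_grad : ∀ x, HasGradientAt f (f' x) x) (hLf : 0 ≤ L_f)
    (hf'_lip : ∀ x y, ‖f' x - f' y‖ ≤ L_f * ‖x - y‖) (hg_cvx : ConvexOn ℝ univ g) (hγ : 0 < γ)
    {β : ℝ} (hγβ : γ ≤ β) {prox : G → G} (hprox : ∀ z, IsProxPoint g γ z (prox z))
    {η δ D : ℝ} (hη : 0 ≤ η) (hη1 : η ≤ 1) (hcoef : (1 - η) * (β - γ) ≤ η * γ)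
    {x s y : E} (hs : ‖s - x‖ ≤ D)
    (hlmo : ⟪γ • f' x + ContinuousLinearMap.adjoint A (A x - prox (A x)), s⟫
      ≤ ⟪γ • f' x + ContinuousLinearMap.adjoint A (A x - prox (A x)), y⟫
        + δ * (η * γ / 2) * D ^ 2 * (L_f + ‖A‖ ^ 2 / γ)) :
    smoothedObjective f g A γ (x + η • (s - x)) - (f y + g (A y))
      ≤ (1 - η) * (smoothedObjective f g A β x - (f y + g (A y)))
        + η ^ 2 * (D ^ 2 * (1 + δ)) * (L_f + ‖A‖ ^ 2 / γ) / 2 := by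
  have hstep := smoothedObjective_cgm_step hf_cvx hf_grad hLf hf'_lip hg_cvx hγ hprox hη hs hlmo
  set R := ‖A x - prox (A x)‖ ^ 2
  have hcmp : (1 - η) * smoothedObjective f g A γ x
      ≤ (1 - η) * (smoothedObjective f g A β x + (β - γ) * R / (2 * γ ^ 2)) := by
    have := (hprox (A x)).moreauEnvelope_le_of_le hg_cvx hγ hγβ
    unfold smoothedObjective
    exact mul_le_mul_of_nonneg_left (by linarith) (by linarith)
  have hR : (1 - η) * ((β - γ) * R / (2 * γ ^ 2)) ≤ η * (R / (2 * γ)) := by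
    calc (1 - η) * ((β - γ) * R / (2 * γ ^ 2)) = (1 - η) * (β - γ) * (R / (2 * γ ^ 2)) := by ring
      _ ≤ η * γ * (R / (2 * γ ^ 2)) := by gcongr
      _ = η * (R / (2 * γ)) := by field_simp
  linarith

end ConditionalGradient

theorem mul_sqrt_add_two_le {k : ℝ} (hk : 0 ≤ k) : k * √(k + 2) ≤ (k + 1) * √(k + 1) := by
  rw [← pow_le_pow_iff_left₀ (by positivity) (by positivity) two_ne_zero, mul_pow, mul_pow,
    Real.sq_sqrt (by positivity), Real.sq_sqrt (by positivity)]
  nlinarith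

theorem homotopy_coef_le {k β₀ : ℝ} (hk : 0 ≤ k) (hβ₀ : 0 < β₀) :
    (1 - 2 / (k + 2)) * (β₀ / √(k + 1) - β₀ / √(k + 2)) ≤ 2 / (k + 2) * (β₀ / √(k + 2)) := by
  have hs : 0 < √(k + 1) := by positivity
  have ht : 0 < √(k + 2) := by positivity
  have key : k * (√(k + 2) - √(k + 1)) ≤ 2 * √(k + 1) := by
    nlinarith [mul_sqrt_add_two_le hk]
  calc (1 - 2 / (k + 2)) * (β₀ / √(k + 1) - β₀ / √(k + 2))
      = k * (√(k + 2) - √(k + 1)) * (β₀ / ((k + 2) * √(k + 1) * √(k + 2))) := by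
        field_simp; ring
    _ ≤ 2 * √(k + 1) * (β₀ / ((k + 2) * √(k + 1) * √(k + 2))) := by gcongr
    _ = _ := by field_simp

theorem homotopy_bound_succ {k C L M β₀ : ℝ} (hk : 0 ≤ k) (hC : 0 ≤ C) (hL : 0 ≤ L) (hM : 0 ≤ M)
    (hβ₀ : 0 < β₀) :
    (1 - 2 / (k + 2)) * (2 * C * (L / (k + 1) + M / (β₀ * √(k + 1))))
        + (2 / (k + 2)) ^ 2 * C * (L + M / (β₀ / √(k + 2))) / 2
      ≤ 2 * C * (L / (k + 2) + M / (β₀ * √(k + 2))) := by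
  have hs : 0 < √(k + 1) := by positivity
  have ht : 0 < √(k + 2) := by positivity
  have ht2 : √(k + 2) ^ 2 = k + 2 := Real.sq_sqrt (by positivity)
  have hLcoef : k / ((k + 1) * (k + 2)) + 1 / (k + 2) ^ 2 ≤ 1 / (k + 2) := by
    rw [div_add_div _ _ (by positivity) (by positivity),
      div_le_div_iff₀ (by positivity) (by positivity)]
    nlinarith
  have hMcoef : k / ((k + 2) * √(k + 1)) + √(k + 2) / (k + 2) ^ 2 ≤ 1 / √(k + 2) := by
    rw [div_add_div _ _ (by positivity) (by positivity),
      div_le_div_iff₀ (by positivity) (by positivity)]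
    linear_combination (k + 2) ^ 2 * mul_sqrt_add_two_le hk + (k + 2) * √(k + 1) * ht2
  calc (1 - 2 / (k + 2)) * (2 * C * (L / (k + 1) + M / (β₀ * √(k + 1))))
        + (2 / (k + 2)) ^ 2 * C * (L + M / (β₀ / √(k + 2))) / 2
      = 2 * C * (L * (k / ((k + 1) * (k + 2)) + 1 / (k + 2) ^ 2)
          + M / β₀ * (k / ((k + 2) * √(k + 1)) + √(k + 2) / (k + 2) ^ 2)) := by
        field_simp; ring
    _ ≤ 2 * C * (L * (1 / (k + 2)) + M / β₀ * (1 / √(k + 2))) := by gcongr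
    _ = _ := by field_simp

theorem homotopy_rate {C L M β₀ : ℝ} (hC : 0 ≤ C) (hL : 0 ≤ L) (hM : 0 ≤ M) (hβ₀ : 0 < β₀)
    {e : ℕ → ℝ}
    (he : ∀ k : ℕ, e (k + 1) ≤ (1 - 2 / ((k : ℝ) + 2)) * e k
      + (2 / ((k : ℝ) + 2)) ^ 2 * C * (L + M / (β₀ / √((k : ℝ) + 2))) / 2) :
    ∀ k, 1 ≤ k → e k ≤ 2 * C * (L / ((k : ℝ) + 1) + M / (β₀ * √((k : ℝ) + 1))) := by
  intro k hk
  induction k, hk using Nat.le_induction with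
  | base =>
    have := he 0
    have hb := homotopy_bound_succ le_rfl hC hL hM hβ₀
    norm_num at this hb ⊢
    linarith
  | succ k hk ih =>
    have hk0 : (0 : ℝ) ≤ k := k.cast_nonneg
    have hη : 0 ≤ 1 - 2 / ((k : ℝ) + 2) := by
      rw [sub_nonneg, div_le_one (by positivity)]; linarith
    rw [show ((k + 1 : ℕ) : ℝ) + 1 = k + 2 by push_cast; ring]
    calc e (k + 1) ≤ _ := he k
      _ ≤ (1 - 2 / ((k : ℝ) + 2)) * (2 * C * (L / ((k : ℝ) + 1) + M / (β₀ * √((k : ℝ) + 1))))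
          + (2 / ((k : ℝ) + 2)) ^ 2 * C * (L + M / (β₀ / √((k : ℝ) + 2))) / 2 := by gcongr
      _ ≤ _ := homotopy_bound_succ hk0 hC hL hM hβ₀

theorem stmt4_general
    (n d : ℕ)
    (X : Set (EuclideanSpace ℝ (Fin n)))
    (hX_cpt : IsCompact X) (hX_cvx : Convex ℝ X)
    (f : EuclideanSpace ℝ (Fin n) → ℝ)
    (f' : EuclideanSpace ℝ (Fin n) → EuclideanSpace ℝ (Fin n))
    (hf_cvx : ConvexOn ℝ Set.univ f)
    (hf_grad : ∀ x, HasGradientAt f (f' x) x)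
    (L_f : ℝ) (hLf : 0 ≤ L_f)
    (hf'_lip : ∀ x y, ‖f' x - f' y‖ ≤ L_f * ‖x - y‖)
    (A : EuclideanSpace ℝ (Fin n) →L[ℝ] EuclideanSpace ℝ (Fin d))
    (g : EuclideanSpace ℝ (Fin d) → ℝ)
    (hg_cvx : ConvexOn ℝ Set.univ g)
    (prox : ℝ → EuclideanSpace ℝ (Fin d) → EuclideanSpace ℝ (Fin d))
    (hprox : ∀ β, 0 < β → ∀ z y, g (prox β z) + ‖z - prox β z‖ ^ 2 / (2 * β)
        ≤ g y + ‖z - y‖ ^ 2 / (2 * β))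
    (gβ : ℝ → EuclideanSpace ℝ (Fin d) → ℝ)
    (hgβ : ∀ β z, gβ β z = ⨅ y : EuclideanSpace ℝ (Fin d), (g y + ‖z - y‖ ^ 2 / (2 * β)))
    (Fstar : ℝ)
    (hFstar : IsLeast ((fun x => f x + g (A x)) '' X) Fstar)
    (β₀ : ℝ) (hβ₀ : 0 < β₀)
    (δ : ℝ) (hδ : 0 ≤ δ)
    (x s v : ℕ → EuclideanSpace ℝ (Fin n))
    (hx1 : x 1 ∈ X)
    (hv : ∀ k, 1 ≤ k → v k = (β₀ / Real.sqrt ((k:ℝ) + 1)) • f' (x k)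
        + (ContinuousLinearMap.adjoint A) (A (x k) - prox (β₀ / Real.sqrt ((k:ℝ) + 1)) (A (x k))))
    (hs_mem : ∀ k, 1 ≤ k → s k ∈ X)
    (hlmo : ∀ k, 1 ≤ k → ∀ z ∈ X, ⟪v k, s k⟫ ≤ ⟪v k, z⟫
      + δ * ((2 / ((k:ℝ) + 1)) * (β₀ / Real.sqrt ((k:ℝ) + 1)) / 2) * (Metric.diam X) ^ 2
          * (L_f + ‖A‖ ^ 2 / (β₀ / Real.sqrt ((k:ℝ) + 1))))
    (hupd : ∀ k, 1 ≤ k → x (k + 1) = x k + (2 / ((k:ℝ) + 1)) • (s k - x k)) :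
    ∀ k, 1 ≤ k →
      f (x (k + 1)) + gβ (β₀ / Real.sqrt ((k:ℝ) + 1)) (A (x (k + 1))) - Fstar
        ≤ 2 * (Metric.diam X) ^ 2
            * (L_f / ((k:ℝ) + 1) + ‖A‖ ^ 2 / (β₀ * Real.sqrt ((k:ℝ) + 1))) * (1 + δ) := by
  obtain ⟨xstar, hxstar, rfl⟩ := hFstar.1
  obtain rfl : gβ = moreauEnvelope g := funext₂ hgβ
  have hx : ∀ k, 1 ≤ k → x k ∈ X := by
    intro k hk
    induction k, hk using Nat.le_induction with
    | base => exact hx1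
    | succ k hk ih =>
      rw [hupd k hk]
      refine hX_cvx.add_smul_sub_mem ih (hs_mem k hk) ⟨by positivity, ?_⟩
      rw [div_le_one (by positivity)]
      exact_mod_cast Nat.succ_le_succ hk
  have hC : 0 ≤ Metric.diam X ^ 2 * (1 + δ) := by positivity
  refine fun k hk => (homotopy_rate hC hLf (sq_nonneg ‖A‖) hβ₀
    (e := fun k => smoothedObjective f g A (β₀ / √((k : ℝ) + 1)) (x (k + 1))
      - (f xstar + g (A xstar))) (fun k => ?_) k hk).trans_eq (by ring)
  have hk2 : ((k + 1 : ℕ) : ℝ) + 1 = k + 2 := by push_cast; ring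
  have hlmo' := hlmo (k + 1) le_add_self xstar hxstar
  rw [hv (k + 1) le_add_self, hk2] at hlmo'
  have hupd' := hupd (k + 1) le_add_self
  rw [hk2] at hupd'
  rw [hk2, hupd']
  have hk0 : (0 : ℝ) ≤ k := k.cast_nonneg
  refine smoothedObjective_homotopy_step hf_cvx hf_grad hLf hf'_lip hg_cvx (by positivity) ?_
    (fun z => hprox _ (by positivity) z) (by positivity) ?_ (homotopy_coef_le hk0 hβ₀) ?_ hlmo'
  · gcongr; linarith
  · rw [div_le_one (by positivity)]; linarith
  · rw [← dist_eq_norm]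
    exact Metric.dist_le_diam_of_mem hX_cpt.isBounded (hs_mem _ le_add_self) (hx _ le_add_self)

theorem stmt4
    (n d : ℕ)
    (X : Set (EuclideanSpace ℝ (Fin n)))
    (hX_ne : X.Nonempty) (hX_cpt : IsCompact X) (hX_cvx : Convex ℝ X)
    (f : EuclideanSpace ℝ (Fin n) → ℝ)
    (f' : EuclideanSpace ℝ (Fin n) → EuclideanSpace ℝ (Fin n))
    (hf_cvx : ConvexOn ℝ Set.univ f)
    (hf_grad : ∀ x, HasGradientAt f (f' x) x)
    (L_f : ℝ) (hLf : 0 ≤ L_f)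
    (hf'_lip : ∀ x y, ‖f' x - f' y‖ ≤ L_f * ‖x - y‖)
    (A : EuclideanSpace ℝ (Fin n) →L[ℝ] EuclideanSpace ℝ (Fin d))
    (g : EuclideanSpace ℝ (Fin d) → ℝ)
    (hg_cvx : ConvexOn ℝ Set.univ g)
    (L_g : ℝ) (hLg : 0 < L_g)
    (hg_lip : ∀ z₁ z₂, |g z₁ - g z₂| ≤ L_g * ‖z₁ - z₂‖)
    (prox : ℝ → EuclideanSpace ℝ (Fin d) → EuclideanSpace ℝ (Fin d))
    (hprox : ∀ β, 0 < β → ∀ z y, g (prox β z) + ‖z - prox β z‖ ^ 2 / (2 * β)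
        ≤ g y + ‖z - y‖ ^ 2 / (2 * β))
    (gβ : ℝ → EuclideanSpace ℝ (Fin d) → ℝ)
    (hgβ : ∀ β z, gβ β z = ⨅ y : EuclideanSpace ℝ (Fin d), (g y + ‖z - y‖ ^ 2 / (2 * β)))
    (Fstar : ℝ)
    (hFstar : IsLeast ((fun x => f x + g (A x)) '' X) Fstar)
    (β₀ : ℝ) (hβ₀ : 0 < β₀)
    (δ : ℝ) (hδ : 0 ≤ δ)
    (x s v : ℕ → EuclideanSpace ℝ (Fin n))
    (hx1 : x 1 ∈ X)
    (hv : ∀ k, 1 ≤ k → v k = (β₀ / Real.sqrt ((k:ℝ) + 1)) • f' (x k)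
        + (ContinuousLinearMap.adjoint A) (A (x k) - prox (β₀ / Real.sqrt ((k:ℝ) + 1)) (A (x k))))
    (hs_mem : ∀ k, 1 ≤ k → s k ∈ X)
    (hlmo : ∀ k, 1 ≤ k → ∀ z ∈ X, ⟪v k, s k⟫ ≤ ⟪v k, z⟫
      + δ * ((2 / ((k:ℝ) + 1)) * (β₀ / Real.sqrt ((k:ℝ) + 1)) / 2) * (Metric.diam X) ^ 2
          * (L_f + ‖A‖ ^ 2 / (β₀ / Real.sqrt ((k:ℝ) + 1))))
    (hupd : ∀ k, 1 ≤ k → x (k + 1) = x k + (2 / ((k:ℝ) + 1)) • (s k - x k)) :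
    ∀ k, 1 ≤ k →
      f (x (k + 1)) + gβ (β₀ / Real.sqrt ((k:ℝ) + 1)) (A (x (k + 1))) - Fstar
        ≤ 2 * (Metric.diam X) ^ 2
            * (L_f / ((k:ℝ) + 1) + ‖A‖ ^ 2 / (β₀ * Real.sqrt ((k:ℝ) + 1))) * (1 + δ) :=
  stmt4_general n d X hX_cpt hX_cvx f f' hf_cvx hf_grad L_f hLf hf'_lip A g hg_cvx prox hprox gβ hgβ
    Fstar hFstar β₀ hβ₀ δ hδ x s v hx1 hv hs_mem hlmo hupd
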